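/- arXiv:1606.07187 — 3 statements merged into one kernel-verified Lean document; each statement's English description precedes it below -/
import Mathlib

section
/- Let M_1,...,M_r ∈ GL(n; ℂ), λ ∈ ℂ*, and let N_k ∈ GL(nr; ℂ) be the convolution matrices: N_k equals the identity except in the k-th block row, which is (λ(M_1−1), ..., λ M_k, ..., M_r−1) (entries λ(M_j−1) for j < k, λM_k at position k, M_j−1 for j > k). Decompose M_k − 1 = P_k Q_k with Q_k S_k = I_{n_k} (n_k = rank(M_k−1)), and set Q = diag(Q_1,...,Q_r), S = diag(S_1,...,S_r). Then Q N_k S = Ñ_k, where Ñ_k equals the identity except in the k-th block row, which is (λ Q_k P_1, ..., λ(Q_k P_k + 1), ..., Q_k P_r). -/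
/-!
Since `Q` and `S` are block diagonal, the `(i, j)` block of `Q N_k S` is `Q_i N_k[i, j] S_j`.
The blocks of `N_k` are multiples of `M_j - 1 = P_j Q_j`, of `M_k = P_k Q_k + 1`, or of the identity,
and `Q_j S_j = 1` collapses each product to `Q_i P_j`, `Q_k P_k + 1` or `1`.
-/

open Matrix

section BlockProduct

variable {R ι n : Type*} [NonUnitalNonAssocSemiring R] [Fintype ι] [DecidableEq ι] [Fintype n]
  {m m' : ι → Type*}

theorem blockDiag_mul_mul_blockDiag_apply (Q : ∀ i, Matrix (m i) n R)
    (N : Matrix (ι × n) (ι × n) R) (S : ∀ i, Matrix n (m' i) R) (p : Σ i, m i) (q : Σ i, m' i) :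
    ((of fun (p : Σ i, m i) (x : ι × n) => if p.1 = x.1 then Q p.1 p.2 x.2 else 0) * N *
      of fun (y : ι × n) (q : Σ i, m' i) => if y.1 = q.1 then S q.1 y.2 q.2 else 0) p q =
    (Q p.1 * (comp ι ι n n R).symm N p.1 q.1 * S q.1) p.2 q.2 := by
  simp [mul_apply, Fintype.sum_prod_type, ite_mul, mul_ite, Finset.sum_mul]

end BlockProduct

section Convolution

variable {R ι n : Type*} [Ring R] [LinearOrder ι] [DecidableEq n]

def convolutionMatrix (lam : R) (M : ι → Matrix n n R) (k : ι) : Matrix (ι × n) (ι × n) R :=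
  of fun p q =>
    if p.1 = k then
      (if q.1 < k then lam * (M q.1 - 1) p.2 q.2
       else if q.1 = k then lam * M k p.2 q.2
       else (M q.1 - 1) p.2 q.2)
    else (1 : Matrix (ι × n) (ι × n) R) p q

theorem comp_symm_convolutionMatrix_apply (lam : R) (M : ι → Matrix n n R) (k i j : ι) :
    (comp ι ι n n R).symm (convolutionMatrix lam M k) i j =
      if i = k then (if j < k then lam • (M j - 1) else if j = k then lam • M k else M j - 1)
      else (1 : Matrix ι ι (Matrix n n R)) i j := by
  ext x y
  rcases eq_or_ne i k with rfl | hik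
  · rcases lt_trichotomy j i with hj | rfl | hj
    · simp [convolutionMatrix, hj]
    · simp [convolutionMatrix]
    · simp [convolutionMatrix, hj.ne', not_lt.2 hj.le]
  · rcases eq_or_ne i j with rfl | hij
    · simp [convolutionMatrix, hik, one_apply]
    · simp [convolutionMatrix, hik, hij, one_apply]

end Convolution

theorem stmt_5_general (r n : ℕ) (nk : Fin r → ℕ) (lam : ℂ) (k : Fin r)
    (M : Fin r → Matrix (Fin n) (Fin n) ℂ)
    (P : ∀ i, Matrix (Fin n) (Fin (nk i)) ℂ)
    (Qm : ∀ i, Matrix (Fin (nk i)) (Fin n) ℂ)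
    (hPQ : ∀ i, M i - 1 = P i * Qm i)
    (S : ∀ i, Matrix (Fin n) (Fin (nk i)) ℂ)
    (hQS : ∀ i, Qm i * S i = 1)
    (N : Matrix (Fin r × Fin n) (Fin r × Fin n) ℂ)
    (hN : N = Matrix.of fun p q =>
        if p.1 = k then
          (if q.1 < k then lam * (M q.1 - 1) p.2 q.2
           else if q.1 = k then lam * M k p.2 q.2
           else (M q.1 - 1) p.2 q.2)
        else (1 : Matrix (Fin r × Fin n) (Fin r × Fin n) ℂ) p q) :
    (Matrix.of fun (p : Σ i, Fin (nk i)) (q : Fin r × Fin n) =>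
        if p.1 = q.1 then Qm p.1 p.2 q.2 else 0) * N *
      (Matrix.of fun (p : Fin r × Fin n) (q : Σ i, Fin (nk i)) =>
        if p.1 = q.1 then S q.1 p.2 q.2 else 0) =
    Matrix.of fun (p q : Σ i, Fin (nk i)) =>
        if p.1 = k then
          (if q.1 < k then lam * (Qm p.1 * P q.1) p.2 q.2
           else if q.1 = k then
             lam * ((Qm p.1 * P q.1) p.2 q.2 +
               (1 : Matrix (Σ i, Fin (nk i)) (Σ i, Fin (nk i)) ℂ) p q)
           else (Qm p.1 * P q.1) p.2 q.2)
        else (1 : Matrix (Σ i, Fin (nk i)) (Σ i, Fin (nk i)) ℂ) p q := by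
  have hN' : N = convolutionMatrix lam M k := by
    rw [hN, convolutionMatrix]
  rw [hN']
  have hMS : ∀ j, (M j - 1) * S j = P j := fun j => by
    rw [hPQ, Matrix.mul_assoc, hQS, Matrix.mul_one]
  ext ⟨i, a⟩ ⟨j, b⟩
  rw [blockDiag_mul_mul_blockDiag_apply, comp_symm_convolutionMatrix_apply]
  simp only [of_apply]
  rcases eq_or_ne i k with rfl | hik
  · rcases lt_trichotomy j i with hj | rfl | hj
    · simp [hj, Matrix.mul_assoc, hMS]
    · have hMS_self : M j * S j = P j + S j := by
        rw [← hMS, Matrix.sub_mul, Matrix.one_mul, sub_add_cancel]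
      simp [Matrix.mul_assoc, hMS_self, Matrix.mul_add, hQS, one_apply]
    · simp [hj.ne', not_lt.2 hj.le, Matrix.mul_assoc, hMS]
  · rcases eq_or_ne i j with rfl | hij
    · simp [hik, hQS, one_apply]
    · simp [hik, hij, one_apply]

/-- 𝒦-reduction of the multiplicative convolution: `Q N_k S = Ñ_k`. -/
theorem stmt_5 (r n : ℕ) (nk : Fin r → ℕ) (lam : ℂ) (hlam : lam ≠ 0) (k : Fin r)
    (M : Fin r → Matrix (Fin n) (Fin n) ℂ) (hM : ∀ i, IsUnit (M i))
    (hrank : ∀ i, (M i - 1).rank = nk i)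
    (P : ∀ i, Matrix (Fin n) (Fin (nk i)) ℂ)
    (Qm : ∀ i, Matrix (Fin (nk i)) (Fin n) ℂ)
    (hPQ : ∀ i, M i - 1 = P i * Qm i)
    (S : ∀ i, Matrix (Fin n) (Fin (nk i)) ℂ)
    (hQS : ∀ i, Qm i * S i = 1)
    (N : Matrix (Fin r × Fin n) (Fin r × Fin n) ℂ)
    (hN : N = Matrix.of fun p q =>
        if p.1 = k then
          (if q.1 < k then lam * (M q.1 - 1) p.2 q.2
           else if q.1 = k then lam * M k p.2 q.2
           else (M q.1 - 1) p.2 q.2)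
        else (1 : Matrix (Fin r × Fin n) (Fin r × Fin n) ℂ) p q) :
    (Matrix.of fun (p : Σ i, Fin (nk i)) (q : Fin r × Fin n) =>
        if p.1 = q.1 then Qm p.1 p.2 q.2 else 0) * N *
      (Matrix.of fun (p : Fin r × Fin n) (q : Σ i, Fin (nk i)) =>
        if p.1 = q.1 then S q.1 p.2 q.2 else 0) =
    Matrix.of fun (p q : Σ i, Fin (nk i)) =>
        if p.1 = k then
          (if q.1 < k then lam * (Qm p.1 * P q.1) p.2 q.2
           else if q.1 = k then
             lam * ((Qm p.1 * P q.1) p.2 q.2 +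
               (1 : Matrix (Σ i, Fin (nk i)) (Σ i, Fin (nk i)) ℂ) p q)
           else (Qm p.1 * P q.1) p.2 q.2)
        else (1 : Matrix (Σ i, Fin (nk i)) (Σ i, Fin (nk i)) ℂ) p q :=
  stmt_5_general r n nk lam k M P Qm hPQ S hQS N hN
end

section
/- For the Okubo system of Yokoyama type (I)_n with canonical form K_i = 1 and L_j = −(∏_{k=1}^n (α_j − ρ_k)) / (∏_{k≠j, 1≤k≤n−1} (α_j − α_k)), the scalar α_n − ρ − K(α−ρ)^{-1} L (with α = diag(α_1,...,α_{n−1})) factors as ξη, where ξ = −(∏_{k=1}^n (ρ − ρ_k))/(∏_{k=1}^{n−1} (ρ − α_k)) and η = 1. Equivalently: α_n − ρ − Σ_{j=1}^{n−1} L_j/(α_j − ρ) = −(∏_{k=1}^n (ρ − ρ_k))/(∏_{k=1}^{n−1} (ρ − α_k)), given the Fuchs relation Σ_{i=1}^n α_i = Σ_{i=1}^n ρ_i. -/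
open Polynomial Finset

/-- If two monic `X - C` products over the same finite index set have the same
sum of roots, their difference has degree `< n`. -/
lemma aux_deg_lt {n : ℕ} (f g : Fin (n + 1) → ℂ) (hsum : ∑ i, f i = ∑ i, g i) :
    ((∏ k, (X - C (f k))) - ∏ k, (X - C (g k))).degree < (n : WithBot ℕ) := by
  have hmonic : ∀ (h : Fin (n + 1) → ℂ), (∏ k, (X - C (h k))).Monic := fun h =>
    monic_prod_of_monic _ _ fun k _ => monic_X_sub_C _
  have hdeg : ∀ (h : Fin (n + 1) → ℂ), (∏ k, (X - C (h k))).natDegree = n + 1 := by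
    intro h
    rw [natDegree_prod_of_monic _ _ fun k _ => monic_X_sub_C _]
    simp
  rw [Polynomial.degree_lt_iff_coeff_zero]
  intro j hj
  rw [coeff_sub]
  rcases lt_trichotomy j (n + 1) with h | h | h
  · have hjn : j = n := by omega
    rw [hjn]
    have h1 := Polynomial.prod_X_sub_C_coeff_card_pred (univ : Finset (Fin (n + 1))) f (by simp)
    have h2 := Polynomial.prod_X_sub_C_coeff_card_pred (univ : Finset (Fin (n + 1))) g (by simp)
    simp only [Finset.card_univ, Fintype.card_fin, Nat.add_sub_cancel] at h1 h2
    rw [h1, h2, hsum, sub_self]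
  · subst h
    have h1 : ((∏ k, (X - C (f k))).coeff (n + 1)) = 1 := by
      have := (hmonic f).leadingCoeff
      rwa [leadingCoeff, hdeg f] at this
    have h2 : ((∏ k, (X - C (g k))).coeff (n + 1)) = 1 := by
      have := (hmonic g).leadingCoeff
      rwa [leadingCoeff, hdeg g] at this
    rw [h1, h2, sub_self]
  · rw [coeff_eq_zero_of_natDegree_lt (by rw [hdeg]; omega),
      coeff_eq_zero_of_natDegree_lt (by rw [hdeg]; omega), sub_self]

/-- Lemma 5.2 (type I): rank-one factorization identity
`α_n − ρ − K(α−ρ)⁻¹L = ξη` for the canonical Okubo system of type (I)_n,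
written as a rational-function identity. Here `α : Fin m → ℂ` are
`α_1, …, α_{n−1}` (`m = n − 1`), `αn = α_n`, and `ρs : Fin (m+1) → ℂ` are
`ρ_1, …, ρ_n`. -/
theorem stmt_8 (m : ℕ) (α : Fin m → ℂ) (αn ρ : ℂ) (ρs : Fin (m + 1) → ℂ)
    (hinj : Function.Injective α) (hρ : ∀ k, ρ ≠ α k)
    (hFuchs : (∑ i, α i) + αn = ∑ i, ρs i) :
    αn - ρ + ∑ j, (∏ k, (α j - ρs k)) /
        ((α j - ρ) * ∏ k ∈ Finset.univ.erase j, (α j - α k)) =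
      -(∏ k, (ρ - ρs k)) / ∏ k, (ρ - α k) := by
  classical
  have hρα : ∀ k, ρ - α k ≠ 0 := fun k => sub_ne_zero.2 (hρ k)
  have hαα : ∀ j k : Fin m, j ≠ k → α j - α k ≠ 0 := fun j k h =>
    sub_ne_zero.2 fun e => h (hinj e)
  -- the polynomial `R`
  set g : Fin (m + 1) → ℂ := Fin.snoc α αn with hg
  have hgsum : ∑ i, ρs i = ∑ i, g i := by
    rw [Fin.sum_univ_castSucc (f := g)]
    simp [hg, ← hFuchs]
  set P : ℂ[X] := ∏ k, (X - C (ρs k)) with hP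
  set S : ℂ[X] := ∏ k, (X - C (g k)) with hS
  have hSfac : S = (X - C αn) * ∏ k, (X - C (α k)) := by
    rw [hS, Fin.prod_univ_castSucc]
    simp [hg, mul_comm]
  have hdeg : (P - S).degree < (m : ℕ) := aux_deg_lt ρs g hgsum
  -- Lagrange interpolation of `P - S` at the nodes `α j`
  have hinjOn : Set.InjOn α (univ : Finset (Fin m)) := hinj.injOn
  have hcard : (#(univ : Finset (Fin m)) : WithBot ℕ) = (m : ℕ) := by simp
  have hinterp : P - S = Lagrange.interpolate univ α fun i => (P - S).eval (α i) :=
    Lagrange.eq_interpolate hinjOn (by rwa [hcard])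
  -- evaluate `P - S` at the nodes
  have hQzero : ∀ i : Fin m, (∏ k, (X - C (α k)) : ℂ[X]).eval (α i) = 0 := by
    intro i
    rw [eval_prod]
    exact Finset.prod_eq_zero (Finset.mem_univ i) (by simp)
  have hnode : ∀ i : Fin m, (P - S).eval (α i) = ∏ k, (α i - ρs k) := by
    intro i
    rw [eval_sub, hSfac, eval_mul, hQzero i, mul_zero, sub_zero, hP, eval_prod]
    simp
  -- evaluate the interpolation identity at `ρ`
  have hkey : (∏ k, (ρ - ρs k)) - (ρ - αn) * ∏ k, (ρ - α k) =
      ∑ i, (∏ k, (α i - ρs k)) *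
        ∏ k ∈ Finset.univ.erase i, ((α i - α k)⁻¹ * (ρ - α k)) := by
    have hL : (P - S).eval ρ = (∏ k, (ρ - ρs k)) - (ρ - αn) * ∏ k, (ρ - α k) := by
      rw [eval_sub, hSfac, eval_mul, hP, eval_prod, eval_prod]
      simp
    have hR : (Lagrange.interpolate univ α fun i => (P - S).eval (α i)).eval ρ =
        ∑ i, (∏ k, (α i - ρs k)) *
          ∏ k ∈ Finset.univ.erase i, ((α i - α k)⁻¹ * (ρ - α k)) := by
      rw [Lagrange.interpolate_apply, eval_finset_sum]
      refine Finset.sum_congr rfl fun i _ => ?_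
      rw [eval_mul, eval_C, hnode i, Lagrange.basis, eval_prod]
      refine congrArg _ (Finset.prod_congr rfl fun k _ => ?_)
      simp [Lagrange.basisDivisor]
    rw [← hL, ← hR]
    exact congrArg (Polynomial.eval ρ) hinterp
  -- now pure field algebra
  set D : ℂ := ∏ k, (ρ - α k) with hD
  have hDne : D ≠ 0 := Finset.prod_ne_zero_iff.2 fun k _ => hρα k
  have hterm : ∀ j : Fin m,
      (∏ k, (α j - ρs k)) / ((α j - ρ) * ∏ k ∈ Finset.univ.erase j, (α j - α k)) =
      -((∏ k, (α j - ρs k)) *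
        ∏ k ∈ Finset.univ.erase j, ((α j - α k)⁻¹ * (ρ - α k))) / D := by
    intro j
    have hE : (∏ k ∈ Finset.univ.erase j, (α j - α k)) ≠ 0 :=
      Finset.prod_ne_zero_iff.2 fun k hk => hαα j k (Finset.ne_of_mem_erase hk).symm
    have hDe : (∏ k ∈ Finset.univ.erase j, (ρ - α k)) ≠ 0 :=
      Finset.prod_ne_zero_iff.2 fun k _ => hρα k
    have h1 : α j - ρ ≠ 0 := sub_ne_zero.2 fun e => hρ j e.symm
    have h2 : ρ - α j ≠ 0 := hρα j
    have hDsplit : D = (ρ - α j) * ∏ k ∈ Finset.univ.erase j, (ρ - α k) :=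
      (Finset.mul_prod_erase univ _ (Finset.mem_univ j)).symm
    have hsplit : (∏ k ∈ Finset.univ.erase j, ((α j - α k)⁻¹ * (ρ - α k))) =
        (∏ k ∈ Finset.univ.erase j, (ρ - α k)) /
          ∏ k ∈ Finset.univ.erase j, (α j - α k) := by
      rw [Finset.prod_mul_distrib, Finset.prod_inv_distrib]
      ring
    rw [hsplit, hDsplit]
    field_simp
    ring
  rw [Finset.sum_congr rfl fun j _ => hterm j, ← Finset.sum_div]
  have hsumneg : (∑ j : Fin m, -((∏ k, (α j - ρs k)) *
      ∏ k ∈ Finset.univ.erase j, ((α j - α k)⁻¹ * (ρ - α k)))) =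
      -((∏ k, (ρ - ρs k)) - (ρ - αn) * D) := by
    rw [Finset.sum_neg_distrib, hkey]
  rw [hsumneg]
  field_simp
  ring
end

section
/- For the canonical Okubo system of type (III)_{2n+1} with K_{ij} = ∏_{k≠i,1≤k≤n+1}(α_k + β_j − ρ_1 − ρ_2) / ∏_{k≠j,1≤k≤n}(β_j − β_k) and L_{ij} = (α_j − ρ_1)(α_j − ρ_2) ∏_{k≠i,1≤k≤n}(α_j + β_k − ρ_1 − ρ_2) / ∏_{k≠j,1≤k≤n+1}(α_j − α_k), the (n+1)×(n+1) matrix α − ρ_2 − K(β − ρ_2)^{-1}L has rank 1 and equals ξη with ξ_i = ∏_{k≠i,1≤k≤n+1}(α_k − ρ_1) / ∏_{k=1}^n(ρ_2 − β_k) and η_j = (α_j − ρ_2) ∏_{k=1}^n(β_k + α_j − ρ_1 − ρ_2) / ∏_{k≠j,1≤k≤n+1}(α_j − α_k). -/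
/-!
For fixed `i`, the polynomial `g(z) = ∏_{k ≠ i} (α_k + z - ρ₁ - ρ₂)` has degree `n`, so it is
recovered by Lagrange interpolation on the `n + 1` nodes `β₁, …, βₙ, ρ₂`. At
`z = ρ₁ + ρ₂ - α_j`, the interpolation terms at the nodes `β_l` are, up to the common factor
`(-1)ⁿ (α_j - ρ₂) / ∏_{k ≠ j} (α_j - α_k)`, the summands of `(K (β - ρ₂)⁻¹ L)_{ij}`; the term at
`ρ₂` gives `ξ_i η_j`, and `g(ρ₁ + ρ₂ - α_j) = ∏_{k ≠ i} (α_k - α_j)` vanishes for `i ≠ j` and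
cancels the diagonal entry `α_i - ρ₂` for `i = j`.
-/

open Polynomial Finset Function

namespace Polynomial

variable {F ι : Type*} [Field F] [DecidableEq ι]

theorem eval_eq_sum_lagrange {s : Finset ι} {v : ι → F} (hvs : Set.InjOn v s) {p : F[X]}
    (hp : p.degree < #s) (y : F) :
    p.eval y = ∑ i ∈ s,
      p.eval (v i) * (∏ j ∈ s.erase i, (y - v j)) / ∏ j ∈ s.erase i, (v i - v j) := by
  conv_lhs => rw [Lagrange.eq_interpolate hvs hp]
  simp only [Lagrange.interpolate_apply, Lagrange.basis, Lagrange.basisDivisor, eval_finsetSum,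
    eval_mul, eval_C, eval_prod, eval_sub, eval_X, mul_div_assoc, ← prod_div_distrib]
  exact sum_congr rfl fun i _ => congrArg _ <| prod_congr rfl fun j _ => inv_mul_eq_div _ _

theorem eval_eq_sum_lagrange_extra_node [Fintype ι] {β : ι → F} (hβ : Injective β) {ρ : F}
    (hρ : ∀ k, β k ≠ ρ) {p : F[X]} (hp : p.degree ≤ Fintype.card ι) (y : F) :
    p.eval y = p.eval ρ * (∏ k, (y - β k)) / ∏ k, (ρ - β k) +
      ∑ l, p.eval (β l) * ((y - ρ) * ∏ k ∈ univ.erase l, (y - β k)) /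
        ((β l - ρ) * ∏ k ∈ univ.erase l, (β l - β k)) := by
  have hv : Injective fun o : Option ι => o.elim ρ β := by
    rintro (_ | a) (_ | b) h
    exacts [rfl, (hρ b h.symm).elim, (hρ a h).elim, congrArg some (hβ h)]
  have hcard : p.degree < #(univ : Finset (Option ι)) := by
    rw [card_univ, Fintype.card_option]
    exact hp.trans_lt (by exact_mod_cast Nat.lt_succ_self _)
  have herase_none : (univ : Finset (Option ι)).erase none = univ.map Embedding.some := by
    ext (_ | x) <;> simp
  have herase_some (l : ι) :
      (univ : Finset (Option ι)).erase (some l) = insertNone (univ.erase l) := by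
    ext (_ | x) <;> simp
  rw [eval_eq_sum_lagrange hv.injOn hcard y, Fintype.sum_option, herase_none]
  simp only [herase_some, prod_map, prod_insertNone]
  rfl

end Polynomial

namespace Finset

variable {R ι : Type*} [CommRing R]

theorem prod_sub_comm (s : Finset ι) (a b : ι → R) :
    ∏ k ∈ s, (a k - b k) = (-1) ^ #s * ∏ k ∈ s, (b k - a k) := by
  rw [← prod_neg]
  exact prod_congr rfl fun k _ => (neg_sub _ _).symm

variable [Fintype ι] [DecidableEq ι]

theorem sub_mul_prod_erase_sub_comm (b : ι → R) (c ρ : R) (l : ι) :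
    (ρ - c) * ∏ k ∈ univ.erase l, (b k - c) =
      (-1) ^ Fintype.card ι * ((c - ρ) * ∏ k ∈ univ.erase l, (c - b k)) := by
  rw [prod_sub_comm, ← card_univ, ← card_erase_add_one (mem_univ l), pow_succ]
  ring

theorem prod_erase_sub_eq_ite (a : ι → R) (i j : ι) :
    ∏ k ∈ univ.erase i, (a k - a j) =
      if i = j then (-1) ^ (Fintype.card ι - 1) * ∏ k ∈ univ.erase j, (a j - a k) else 0 := by
  split_ifs with hij
  · rw [hij, prod_sub_comm, card_erase_of_mem (mem_univ j), card_univ]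
  · exact prod_eq_zero (mem_erase.2 ⟨Ne.symm hij, mem_univ j⟩) (sub_self _)

end Finset

section Okubo

variable {F : Type*} [Field F] {n : ℕ} {α : Fin (n + 1) → F} {β : Fin n → F} {ρ1 ρ2 : F}

theorem sum_okubo_K_L_eq (hβ : Injective β) (hρ2 : ∀ k, β k ≠ ρ2) (i j : Fin (n + 1)) :
    ∑ l : Fin n,
        ((∏ k ∈ univ.erase i, (α k + β l - ρ1 - ρ2)) / ∏ k ∈ univ.erase l, (β l - β k)) *
          ((α j - ρ1) * (α j - ρ2) * (∏ k ∈ univ.erase l, (α j + β k - ρ1 - ρ2)) /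
            ∏ k ∈ univ.erase j, (α j - α k)) / (β l - ρ2) =
      (-1) ^ n * (α j - ρ2) / (∏ k ∈ univ.erase j, (α j - α k)) *
        (∏ k ∈ univ.erase i, (α k - α j) - (∏ k ∈ univ.erase i, (α k - ρ1)) *
          ((-1) ^ n * ∏ k, (β k + α j - ρ1 - ρ2)) / ∏ k, (ρ2 - β k)) := by
  set s : F := (-1) ^ n
  set y := ρ1 + ρ2 - α j
  set g := Lagrange.nodal (univ.erase i) fun k => ρ1 + ρ2 - α k
  have hg (z : F) : g.eval z = ∏ k ∈ univ.erase i, (α k + z - ρ1 - ρ2) := by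
    rw [Lagrange.eval_nodal]
    exact prod_congr rfl fun k _ => by ring
  have hgy : g.eval y = ∏ k ∈ univ.erase i, (α k - α j) := by
    rw [hg]; exact prod_congr rfl fun k _ => by ring
  have hgρ : g.eval ρ2 = ∏ k ∈ univ.erase i, (α k - ρ1) := by
    rw [hg]; exact prod_congr rfl fun k _ => by ring
  have hnodes : ∏ k, (y - β k) = s * ∏ k, (β k + α j - ρ1 - ρ2) := by
    rw [prod_sub_comm, card_univ, Fintype.card_fin]
    exact congrArg _ <| prod_congr rfl fun k _ => by ring
  have hnum (l : Fin n) : (α j - ρ1) * ∏ k ∈ univ.erase l, (α j + β k - ρ1 - ρ2) =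
      s * ((y - ρ2) * ∏ k ∈ univ.erase l, (y - β k)) := by
    have h := sub_mul_prod_erase_sub_comm β y ρ2 l
    rw [Fintype.card_fin] at h
    rw [← h]
    congr 1
    · ring
    · exact prod_congr rfl fun k _ => by ring
  have hlag := eval_eq_sum_lagrange_extra_node hβ hρ2 (p := g)
    (by simp [g, Lagrange.degree_nodal]) y
  calc _ = ∑ l, s * (α j - ρ2) / (∏ k ∈ univ.erase j, (α j - α k)) *
          (g.eval (β l) * ((y - ρ2) * ∏ k ∈ univ.erase l, (y - β k)) /
            ((β l - ρ2) * ∏ k ∈ univ.erase l, (β l - β k))) := by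
        refine sum_congr rfl fun l _ => ?_
        rw [mul_right_comm (α j - ρ1), hnum, hg, div_eq_mul_inv _ ((β l - ρ2) * _), mul_inv]
        ring
    _ = _ := by rw [← mul_sum, eq_sub_of_add_eq' hlag.symm, hgy, hgρ, hnodes]

end Okubo

theorem stmt_10_general (n : ℕ) (α : Fin (n + 1) → ℂ) (β : Fin n → ℂ) (ρ1 ρ2 : ℂ)
    (hα : Function.Injective α) (hβ : Function.Injective β)
    (hρ2 : ∀ k, ρ2 ≠ β k) :
    ∀ i j : Fin (n + 1),
      (α i - ρ2) * (if i = j then 1 else 0) -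
        ∑ l : Fin n,
          ((∏ k ∈ Finset.univ.erase i, (α k + β l - ρ1 - ρ2)) /
              ∏ k ∈ Finset.univ.erase l, (β l - β k)) *
            ((α j - ρ1) * (α j - ρ2) *
                (∏ k ∈ Finset.univ.erase l, (α j + β k - ρ1 - ρ2)) /
              ∏ k ∈ Finset.univ.erase j, (α j - α k)) / (β l - ρ2) =
      ((∏ k ∈ Finset.univ.erase i, (α k - ρ1)) / ∏ k : Fin n, (ρ2 - β k)) *
        ((α j - ρ2) * (∏ k : Fin n, (β k + α j - ρ1 - ρ2)) /
          ∏ k ∈ Finset.univ.erase j, (α j - α k)) := by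
  intro i j
  rw [sum_okubo_K_L_eq hβ (fun k h => hρ2 k h.symm), prod_erase_sub_eq_ite, Fintype.card_fin,
    Nat.add_sub_cancel]
  have hs : ((-1 : ℂ) ^ n) * (-1) ^ n = 1 := by rw [← pow_add]; exact Even.neg_one_pow ⟨n, rfl⟩
  set D := ∏ k ∈ univ.erase j, (α j - α k)
  set G := ∏ k ∈ univ.erase i, (α k - ρ1)
  set Q := ∏ k : Fin n, (β k + α j - ρ1 - ρ2)
  set W := ∏ k : Fin n, (ρ2 - β k)
  split_ifs with hij
  · subst hij
    have hD : D / D = 1 := div_self <| prod_ne_zero_iff.2 fun k hk =>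
      sub_ne_zero.2 fun h => ne_of_mem_erase hk (hα h).symm
    linear_combination ((α i - ρ2) * G * Q / (W * D) - (α i - ρ2)) * hs -
      (-1) ^ n * (-1) ^ n * (α i - ρ2) * hD
  · linear_combination ((α j - ρ2) * G * Q / (W * D)) * hs

/-- Lemma 5.2 (2) of the paper: for the canonical Okubo system of type (III)_{2n+1},
the matrix `α − ρ₂ − L(β − ρ₂)⁻¹ K` equals the rank-one matrix `ξη`,
stated as the entrywise identity. -/
theorem stmt_10 (n : ℕ) (α : Fin (n + 1) → ℂ) (β : Fin n → ℂ) (ρ1 ρ2 ρ3 : ℂ)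
    (hα : Function.Injective α) (hβ : Function.Injective β)
    (hρ2 : ∀ k, ρ2 ≠ β k)
    (hFuchs : (∑ i, α i) + ∑ i, β i = (n : ℂ) * ρ1 + (n : ℂ) * ρ2 + ρ3) :
    ∀ i j : Fin (n + 1),
      (α i - ρ2) * (if i = j then 1 else 0) -
        ∑ l : Fin n,
          ((∏ k ∈ Finset.univ.erase i, (α k + β l - ρ1 - ρ2)) /
              ∏ k ∈ Finset.univ.erase l, (β l - β k)) *
            ((α j - ρ1) * (α j - ρ2) *
                (∏ k ∈ Finset.univ.erase l, (α j + β k - ρ1 - ρ2)) /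
              ∏ k ∈ Finset.univ.erase j, (α j - α k)) / (β l - ρ2) =
      ((∏ k ∈ Finset.univ.erase i, (α k - ρ1)) / ∏ k : Fin n, (ρ2 - β k)) *
        ((α j - ρ2) * (∏ k : Fin n, (β k + α j - ρ1 - ρ2)) /
          ∏ k ∈ Finset.univ.erase j, (α j - α k)) :=
  stmt_10_general n α β ρ1 ρ2 hα hβ hρ2
end
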